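/- (Theorem 3.3(3), uniqueness) Let n be a positive integer with f ≠ n. If v = β·e(n,0,0) + α·e(n−1,1,1) (α, β ∈ ℂ) is a nonzero vector satisfying A₋v = c₊v = c₋v = 0, then h = −n, β ≠ 0, and α = nβ/(f−n); that is, v is a nonzero scalar multiple of e(n,0,0) + (n/(f−n))·e(n−1,1,1). -/

import Mathlib

/-!
Verma module `M(h,f)` over the ℤ₂×ℤ₂ graded superalgebra of Rittenberg–Wyler,
realized on the space of finitely supported functions `ℕ × Fin 2 × Fin 2 →₀ ℂ`,
with basis vectors `e k μ ν`.
-/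

noncomputable section

/-- Index set for the basis of the Verma module. -/
abbrev Idx : Type := ℕ × Fin 2 × Fin 2

/-- The underlying space of the Verma module `M(h,f)`. -/
abbrev Mmod : Type := Idx →₀ ℂ

/-- The standard basis vector `e(k,μ,ν)`. -/
def e (k : ℕ) (μ ν : Fin 2) : Mmod := Finsupp.single (k, μ, ν) 1

/-- Build a linear operator on `Mmod` from its values on basis vectors. -/
def mkOp (φ : Idx → Mmod) : Mmod →ₗ[ℂ] Mmod := Finsupp.lift Mmod ℂ Idx φ

/-- The lowering operator `A₋`.
`A₋ e(k,μ,ν) = 4k(h+k+μ+ν−1)·e(k−1,μ,ν) + 4(h+f)·δ_{μ,1}δ_{ν,1}·e(k,0,0)`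
(with the convention `e(−1,μ,ν) = 0`, automatic since the coefficient vanishes at `k = 0`). -/
def Am (h f : ℂ) : Mmod →ₗ[ℂ] Mmod :=
  mkOp fun p =>
    (4 * (p.1 : ℂ) * (h + (p.1 : ℂ) + ((p.2.1 : ℕ) : ℂ) + ((p.2.2 : ℕ) : ℂ) - 1))
        • e (p.1 - 1) p.2.1 p.2.2
    + (if p.2.1 = 1 ∧ p.2.2 = 1 then (4 * (h + f)) • e p.1 0 0 else 0)

/-- The lowering operator `c₊`.
`c₊ e(k,μ,ν) = 2(h+2k+2ν−f)·δ_{μ,1}·e(k,0,ν) + (−1)^μ·2k·δ_{ν,0}·e(k−1,μ,1)`. -/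
def cp (h f : ℂ) : Mmod →ₗ[ℂ] Mmod :=
  mkOp fun p =>
    (if p.2.1 = 1 then
        (2 * (h + 2 * (p.1 : ℂ) + 2 * ((p.2.2 : ℕ) : ℂ) - f)) • e p.1 0 p.2.2 else 0)
    + (if p.2.2 = 0 then
        ((-1 : ℂ) ^ (p.2.1 : ℕ) * (2 * (p.1 : ℂ))) • e (p.1 - 1) p.2.1 1 else 0)

/-- The lowering operator `c₋`.
`c₋ e(k,μ,ν) = (−1)^μ·2(h+f)·δ_{ν,1}·e(k,μ,0) + 2k·δ_{μ,0}·e(k−1,1,ν)`. -/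
def cm (h f : ℂ) : Mmod →ₗ[ℂ] Mmod :=
  mkOp fun p =>
    (if p.2.2 = 1 then
        ((-1 : ℂ) ^ (p.2.1 : ℕ) * (2 * (h + f))) • e p.1 p.2.1 0 else 0)
    + (if p.2.1 = 0 then (2 * (p.1 : ℂ)) • e (p.1 - 1) 1 p.2.2 else 0)

/-- The raising operator `A₊`: `A₊ e(k,μ,ν) = e(k+1,μ,ν)`. -/
def Ap : Mmod →ₗ[ℂ] Mmod := mkOp fun p => e (p.1 + 1) p.2.1 p.2.2

/-- The raising operator `d₊`: `d₊ e(k,μ,ν) = δ_{μ,0}·e(k,1,ν)`. -/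
def dp : Mmod →ₗ[ℂ] Mmod := mkOp fun p => if p.2.1 = 0 then e p.1 1 p.2.2 else 0

/-- The raising operator `d₋`:
`d₋ e(k,μ,ν) = (−1)^μ·δ_{ν,0}·e(k,μ,1) + 2·δ_{μ,1}·e(k+1,0,ν)`. -/
def dm : Mmod →ₗ[ℂ] Mmod :=
  mkOp fun p =>
    (if p.2.2 = 0 then ((-1 : ℂ) ^ (p.2.1 : ℕ)) • e p.1 p.2.1 1 else 0)
    + (if p.2.1 = 1 then (2 : ℂ) • e (p.1 + 1) 0 p.2.2 else 0)

/-- The Cartan operator `N`: `N e(k,μ,ν) = (h+2k+μ+ν)·e(k,μ,ν)`. -/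
def Nop (h : ℂ) : Mmod →ₗ[ℂ] Mmod :=
  mkOp fun p =>
    (h + 2 * (p.1 : ℂ) + ((p.2.1 : ℕ) : ℂ) + ((p.2.2 : ℕ) : ℂ)) • e p.1 p.2.1 p.2.2

/-- The Cartan operator `F̃`: `F̃ e(k,μ,ν) = (f+μ−ν)·e(k,μ,ν)`. -/
def Fop (f : ℂ) : Mmod →ₗ[ℂ] Mmod :=
  mkOp fun p =>
    (f + ((p.2.1 : ℕ) : ℂ) - ((p.2.2 : ℕ) : ℂ)) • e p.1 p.2.1 p.2.2

/-- The set of basis vectors of level `m` (the level of `e(k,μ,ν)` is `2k+μ+ν`). -/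
def levelVecs (m : ℕ) : Set Mmod :=
  {v | ∃ (k : ℕ) (μ ν : Fin 2), 2 * k + (μ : ℕ) + (ν : ℕ) = m ∧ v = e k μ ν}

/-- `v` is a singular vector at level `m ≥ 1`: it is nonzero, lies in the span of the
level-`m` basis vectors, and is annihilated by `A₋`, `c₊` and `c₋`. -/
def IsSingular (h f : ℂ) (m : ℕ) (v : Mmod) : Prop :=
  1 ≤ m ∧ v ≠ 0 ∧ v ∈ Submodule.span ℂ (levelVecs m) ∧
    Am h f v = 0 ∧ cp h f v = 0 ∧ cm h f v = 0

/-!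
Reading off the coefficients of `e(n−1,0,0)`, `e(n−1,0,1)` and `e(n−1,1,0)` in `A₋v`, `c₊v` and
`c₋v` gives three linear equations in `α, β`. If `β = 0` the last two force `h + f = 0` and
`h + 2n − f = 0`, i.e. `f = n`. Adding the first and third equation gives `nβ(h + n) = 0`, so
`h = −n`, and then the second one determines `α`.
-/

lemma mkOp_e (φ : Idx → Mmod) (k : ℕ) (μ ν : Fin 2) : mkOp φ (e k μ ν) = φ (k, μ, ν) := by
  simp [mkOp, e]

lemma e_apply (k : ℕ) (μ ν : Fin 2) (p : Idx) : e k μ ν p = if (k, μ, ν) = p then 1 else 0 := by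
  simp [e, Finsupp.single_apply]

section EvenLevelCoefficients

variable (h f α β : ℂ) (n : ℕ)

lemma Am_even_level_apply :
    Am h f (β • e n 0 0 + α • e (n - 1) 1 1) (n - 1, 0, 0) =
      4 * (n * β * (h + n - 1) + α * (h + f)) := by
  simp [Am, mkOp_e, e_apply, Prod.ext_iff]
  ring

lemma cp_even_level_apply (hn : 1 ≤ n) :
    cp h f (β • e n 0 0 + α • e (n - 1) 1 1) (n - 1, 0, 1) =
      2 * (n * β + α * (h + 2 * n - f)) := by
  simp [cp, mkOp_e, e_apply, Nat.cast_sub hn]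
  ring

lemma cm_even_level_apply :
    cm h f (β • e n 0 0 + α • e (n - 1) 1 1) (n - 1, 1, 0) =
      2 * (n * β - α * (h + f)) := by
  simp [cm, mkOp_e, e_apply]
  ring

end EvenLevelCoefficients

theorem even_level_coeffs_of_eqs {K : Type*} [Field K] [CharZero K] {h f n α β : K}
    (hn : n ≠ 0) (hf : f ≠ n) (hαβ : α ≠ 0 ∨ β ≠ 0)
    (hA : n * β * (h + n - 1) + α * (h + f) = 0) (hcp : n * β + α * (h + 2 * n - f) = 0)
    (hcm : n * β - α * (h + f) = 0) :
    h = -n ∧ β ≠ 0 ∧ α = n * β / (f - n) := by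
  have hβ : β ≠ 0 := by
    rintro rfl
    have hα : α ≠ 0 := by simpa using hαβ
    have hhf : h + f = 0 := by simpa [hα] using hcm
    have : h + 2 * n - f = 0 := by simpa [hα] using hcp
    exact hf (by linear_combination (hhf - this) / 2)
  have hh : h = -n := by
    have : n * β * (h + n) = 0 := by linear_combination hA + hcm
    simpa [hn, hβ, add_eq_zero_iff_eq_neg] using this
  refine ⟨hh, hβ, ?_⟩
  rw [eq_div_iff (sub_ne_zero.mpr hf)]
  linear_combination -hcp + α * hh

/-- Theorem 3.3(3), uniqueness: let `n ≥ 1` with `f ≠ n`. If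
`v = β·e(n,0,0) + α·e(n−1,1,1)` is nonzero and annihilated by `A₋`, `c₊`, `c₋`,
then `h = −n`, `β ≠ 0`, `α = nβ/(f−n)`, i.e. `v` is a nonzero scalar multiple of
`e(n,0,0) + (n/(f−n))·e(n−1,1,1)`. -/
theorem even_level_singular_uniqueness (h f : ℂ) (n : ℕ) (hn : 1 ≤ n)
    (hf : f ≠ (n : ℂ)) (α β : ℂ) (v : Mmod)
    (hv : v = β • e n 0 0 + α • e (n - 1) 1 1) (hv0 : v ≠ 0)
    (h1 : Am h f v = 0) (h2 : cp h f v = 0) (h3 : cm h f v = 0) :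
    h = -(n : ℂ) ∧ β ≠ 0 ∧ α = (n : ℂ) * β / (f - (n : ℂ)) ∧
    ∃ c : ℂ, c ≠ 0 ∧ v = c • (e n 0 0 + ((n : ℂ) / (f - (n : ℂ))) • e (n - 1) 1 1) := by
  subst hv
  have hαβ : α ≠ 0 ∨ β ≠ 0 := by
    by_contra! h0
    simp [h0] at hv0
  have hA := Am_even_level_apply h f α β n ▸ DFunLike.congr_fun h1 (n - 1, 0, 0)
  have hcp := cp_even_level_apply h f α β n hn ▸ DFunLike.congr_fun h2 (n - 1, 0, 1)
  have hcm := cm_even_level_apply h f α β n ▸ DFunLike.congr_fun h3 (n - 1, 1, 0)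
  obtain ⟨hh, hβ, hα⟩ := even_level_coeffs_of_eqs (by exact_mod_cast (by omega : n ≠ 0)) hf hαβ
    (by simpa using hA) (by simpa using hcp) (by simpa using hcm)
  refine ⟨hh, hβ, hα, β, hβ, ?_⟩
  rw [smul_add, smul_smul, hα, mul_div_right_comm, mul_comm]
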